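/- arXiv:2401.10974 — 4 statements merged into one kernel-verified Lean document; each statement's English description precedes it below -/
import Mathlib

section
/- Let X ⊂ P⁵ (over ℂ) be defined by the two equations x₁x₂x₃ − x₄x₅x₆ = 0 and a(x₁+x₂+x₃) + x₄+x₅+x₆ = 0, where a ∈ ℂ satisfies a³ ∉ {0, −1}. Let G ≅ C₃ × C₃ act on P⁵ by the two commuting transformations g₁: (x₁,x₂,x₃,x₄,x₅,x₆) ↦ (x₃,x₁,x₂,x₄,x₅,x₆) and g₂: (x₁,...,x₆) ↦ (x₁,x₂,x₃,x₆,x₄,x₅). Then G has no fixed point on X: there is no point of X fixed by both g₁ and g₂. -/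
/-- The `C₃ × C₃`-action generated by `g₁ : (x₁,…,x₆) ↦ (x₃,x₁,x₂,x₄,x₅,x₆)` and
`g₂ : (x₁,…,x₆) ↦ (x₁,x₂,x₃,x₆,x₄,x₅)` on the 9-nodal cubic threefold
`{x₁x₂x₃ - x₄x₅x₆ = a(x₁+x₂+x₃) + x₄+x₅+x₆ = 0} ⊂ ℙ⁵` (with `a³ ∉ {0,-1}`)
has no fixed point. -/
theorem stmt_3 (a : ℂ) (ha : a ^ 3 ≠ 0) (ha' : a ^ 3 ≠ -1) :
    ¬ ∃ v : Fin 6 → ℂ, v ≠ 0 ∧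
        v 0 * v 1 * v 2 - v 3 * v 4 * v 5 = 0 ∧
        a * (v 0 + v 1 + v 2) + v 3 + v 4 + v 5 = 0 ∧
        (∃ c : ℂ, c ≠ 0 ∧ ![v 2, v 0, v 1, v 3, v 4, v 5] = c • v) ∧
        (∃ c : ℂ, c ≠ 0 ∧ ![v 0, v 1, v 2, v 5, v 3, v 4] = c • v) := by
  rintro ⟨v, hv, hcubic, hlin, ⟨c, hc, hc1⟩, ⟨d, hd, hd1⟩⟩
  have e0 : v 2 = c * v 0 := by simpa using congrFun hc1 0
  have e1 : v 0 = c * v 1 := by simpa using congrFun hc1 1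
  have e2 : v 1 = c * v 2 := by simpa using congrFun hc1 2
  have e3 : v 3 = c * v 3 := by simpa using congrFun hc1 3
  have f0 : v 0 = d * v 0 := by simpa using congrFun hd1 0
  have f3 : v 5 = d * v 3 := by simpa using congrFun hd1 3
  have f4 : v 3 = d * v 4 := by simpa using congrFun hd1 4
  have f5 : v 4 = d * v 5 := by simpa using congrFun hd1 5
  by_cases h0 : v 0 = 0
  · -- then v 1 = v 2 = 0
    have h1 : v 1 = 0 := by
      have : c * v 1 = 0 := by rw [← e1, h0]
      exact (mul_eq_zero.mp this).resolve_left hc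
    have h2 : v 2 = 0 := by rw [e0, h0, mul_zero]
    by_cases h3 : v 3 = 0
    · have h5 : v 5 = 0 := by rw [f3, h3, mul_zero]
      have h4 : v 4 = 0 := by rw [f5, h5, mul_zero]
      apply hv
      funext i
      fin_cases i <;> simpa [h0, h1, h2, h3, h4, h5]
    · -- v 3 ≠ 0, so v 4, v 5 ≠ 0, but product is zero
      have h4 : v 4 ≠ 0 := fun h => h3 (by rw [f4, h, mul_zero])
      have h5 : v 5 ≠ 0 := fun h => h4 (by rw [f5, h, mul_zero])
      have : v 3 * v 4 * v 5 = 0 := by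
        have := hcubic; rw [h0] at this; linear_combination -this
      exact (mul_ne_zero (mul_ne_zero h3 h4) h5) this
  · by_cases h3 : v 3 = 0
    · -- v 0 ≠ 0, so v 1, v 2 ≠ 0, but product is zero
      have h4 : v 4 = 0 := by
        have : d * v 4 = 0 := by rw [← f4, h3]
        exact (mul_eq_zero.mp this).resolve_left hd
      have h5 : v 5 = 0 := by rw [f3, h3, mul_zero]
      have h2 : v 2 ≠ 0 := fun h => h0 (by rw [e2] at e1; rw [e1, h, mul_zero, mul_zero])
      have h1 : v 1 ≠ 0 := fun h => h0 (by rw [e1, h, mul_zero])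
      have : v 0 * v 1 * v 2 = 0 := by
        have := hcubic; rw [h3, h4, h5] at this; linear_combination this
      exact (mul_ne_zero (mul_ne_zero h0 h1) h2) this
    · -- both nonzero: c = 1 and d = 1
      have hcc : c = 1 := by
        have hz : (c - 1) * v 3 = 0 := by linear_combination -e3
        rcases mul_eq_zero.mp hz with h | h
        · linear_combination h
        · exact absurd h h3
      have hdd : d = 1 := by
        have hz : (d - 1) * v 0 = 0 := by linear_combination -f0
        rcases mul_eq_zero.mp hz with h | h
        · linear_combination h
        · exact absurd h h0
      rw [hcc, one_mul] at e0 e1 e2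
      rw [hdd, one_mul] at f3 f4
      -- v 1 = v 0, v 2 = v 0, v 4 = v 3, v 5 = v 3
      rw [e0] at hcubic hlin e2
      rw [← e1] at hcubic hlin
      rw [f3, f4] at hcubic hlin
      -- hcubic : v 0 ^3 - v 4 ^3 = 0, hlin : 3a v0 + 3 v4 = 0
      have key : (1 + a ^ 3) * v 0 ^ 3 = 0 := by
        linear_combination hcubic + (a ^ 2 * v 0 ^ 2 - a * v 0 * v 4 + v 4 ^ 2) / 3 * hlin
      rcases mul_eq_zero.mp key with h | h
      · exact ha' (by linear_combination h)
      · exact h0 ((pow_eq_zero_iff (Nat.succ_ne_zero 2)).mp h)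
end

section
/- The wreath product S₃ ≀ C₂ = (S₃ × S₃) ⋊ C₂ (of order 72, with C₂ swapping the two S₃ factors) has no subgroup of index 3. -/
open Equiv Subgroup SemidirectProduct

set_option maxHeartbeats 1000000 in
/-- In `S₃`, if `u` is conjugate (via `g`) to an element `v` commuting with both `u` and `w`,
where `u^3 = 1`, `w^2 = 1` and `w` inverts `u`, then `u = 1`. -/
private lemma perm3_key : ∀ u v w g : Equiv.Perm (Fin 3),
    u ^ 3 = 1 → w ^ 2 = 1 → w * u * w = u⁻¹ →
    u * v = v * u → w * v = v * w → v = g * u * g⁻¹ → u = 1 := by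
  decide

private def c3 : Equiv.Perm (Fin 3) := finRotate 3
private def a3 : Equiv.Perm (Fin 3) := Equiv.swap 0 1

private lemma hc3 : c3 ^ 3 = 1 := by decide
private lemma ha3 : a3 ^ 2 = 1 := by decide
private lemma hac3 : a3 * c3 * a3 = c3⁻¹ := by decide
private lemma horder_c3 : orderOf c3 = 3 :=
  orderOf_eq_prime hc3 (by decide)

/-- The wreath product `S₃ ≀ C₂ = (S₃ × S₃) ⋊ C₂`, with `C₂` swapping the two `S₃`
factors, has no subgroup of index 3. -/
theorem stmt_4
    (φ : Multiplicative (ZMod 2) →*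
      MulAut (Equiv.Perm (Fin 3) × Equiv.Perm (Fin 3)))
    (hφ : ∀ p : Equiv.Perm (Fin 3) × Equiv.Perm (Fin 3),
      φ (Multiplicative.ofAdd 1) p = (p.2, p.1)) :
    ∀ H : Subgroup
        ((Equiv.Perm (Fin 3) × Equiv.Perm (Fin 3)) ⋊[φ] Multiplicative (ZMod 2)),
      H.index ≠ 3 := by
  intro H hH
  classical
  set G := (Equiv.Perm (Fin 3) × Equiv.Perm (Fin 3)) ⋊[φ] Multiplicative (ZMod 2) with hG
  -- the permutation action on the 3 cosets
  set f : G →* Equiv.Perm (G ⧸ H) := MulAction.toPermHom G (G ⧸ H) with hfdef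
  have hK : H.normalCore = f.ker := Subgroup.normalCore_eq_ker H
  have hqcard : Nat.card (G ⧸ H) = 3 := by rw [← Subgroup.index_eq_card]; exact hH
  have : Finite (G ⧸ H) := Nat.finite_of_card_ne_zero (by omega)
  let e : (G ⧸ H) ≃ Fin 3 := Finite.equivFinOfCardEq hqcard
  -- transport to Perm (Fin 3)
  let F : G →* Equiv.Perm (Fin 3) :=
    { toFun := fun g => e.permCongr (f g)
      map_one' := by ext x; simp
      map_mul' := by intro g h; ext x; simp [Equiv.permCongr_apply, Equiv.Perm.mul_apply] }
  have hF1 : ∀ g : G, F g = 1 → f g = 1 := by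
    intro g h
    refine e.permCongr.injective (h.trans ?_)
    ext x; simp [Equiv.permCongr_apply]
  -- the key elements
  set x₁ : G := inl (c3, 1) with hx₁def
  set x₂ : G := inl (1, c3) with hx₂def
  set y : G := inl (a3, 1) with hydef
  set z : G := inr (Multiplicative.ofAdd 1) with hzdef
  have hx1 : x₁ ^ 3 = 1 := by
    rw [hx₁def, ← map_pow, Prod.pow_mk, hc3, one_pow]; rfl
  have hy2 : y ^ 2 = 1 := by
    rw [hydef, ← map_pow, Prod.pow_mk, ha3, one_pow]; rfl
  have hyx : y * x₁ * y = x₁⁻¹ := by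
    rw [hydef, hx₁def, ← map_mul, ← map_mul, ← map_inv, Prod.mk_mul_mk, Prod.mk_mul_mk,
      Prod.inv_mk, hac3]
    simp
  have hcomm1 : x₁ * x₂ = x₂ * x₁ := by
    rw [hx₁def, hx₂def, ← map_mul, ← map_mul, Prod.mk_mul_mk, Prod.mk_mul_mk]
    simp
  have hcomm2 : y * x₂ = x₂ * y := by
    rw [hydef, hx₂def, ← map_mul, ← map_mul, Prod.mk_mul_mk, Prod.mk_mul_mk]
    simp
  have hconj : x₂ = z * x₁ * z⁻¹ := by
    have h' : (φ (Multiplicative.ofAdd 1)) (c3, (1 : Equiv.Perm (Fin 3))) = (1, c3) :=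
      hφ (c3, 1)
    rw [hx₂def, hx₁def, hzdef, ← h', inl_aut, map_inv]
  -- relations among images
  have Hu : F x₁ ^ 3 = 1 := by rw [← map_pow, hx1, map_one]
  have Hw : F y ^ 2 = 1 := by rw [← map_pow, hy2, map_one]
  have Hwu : F y * F x₁ * F y = (F x₁)⁻¹ := by
    rw [← map_mul, ← map_mul, hyx, map_inv]
  have Huv : F x₁ * F x₂ = F x₂ * F x₁ := by rw [← map_mul, hcomm1, map_mul]
  have Hwv : F y * F x₂ = F x₂ * F y := by rw [← map_mul, hcomm2, map_mul]
  have Hv : F x₂ = F z * F x₁ * (F z)⁻¹ := by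
    rw [← map_inv, ← map_mul, ← map_mul, ← hconj]
  have u1 : F x₁ = 1 := perm3_key (F x₁) (F x₂) (F y) (F z) Hu Hw Hwu Huv Hwv Hv
  have v1 : F x₂ = 1 := by rw [Hv, u1]; group
  have f1 : f x₁ = 1 := hF1 _ u1
  have f2 : f x₂ = 1 := hF1 _ v1
  -- the Sylow 3-subgroup A₃ × A₃, embedded via inl
  set S : Subgroup G :=
    ((Subgroup.zpowers c3).prod (Subgroup.zpowers c3)).map (inl : _ →* G) with hSdef
  have hSker : S ≤ f.ker := by
    rintro g hg
    rw [hSdef, Subgroup.mem_map] at hg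
    obtain ⟨p, hp, rfl⟩ := hg
    rw [Subgroup.mem_prod] at hp
    obtain ⟨⟨m, hm⟩, ⟨k, hk⟩⟩ := hp
    have hpe : p = (c3, (1 : Equiv.Perm (Fin 3))) ^ m * ((1 : Equiv.Perm (Fin 3)), c3) ^ k := by
      ext
      · simp [← hm]
      · simp [← hk]
    rw [MonoidHom.mem_ker, hpe, map_mul, map_zpow, map_zpow, map_mul, map_zpow, map_zpow,
      ← hx₁def, ← hx₂def, f1, f2]
    simp
  -- counting
  have hcardS : Nat.card S = 9 := by
    have h1 : Nat.card S =
        Nat.card ((Subgroup.zpowers c3).prod (Subgroup.zpowers c3)) :=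
      Nat.card_congr (Subgroup.equivMapOfInjective _ _ inl_injective).toEquiv.symm
    rw [h1, Nat.card_congr (Subgroup.prodEquiv _ _).toEquiv, Nat.card_prod,
      Nat.card_zpowers, horder_c3]
  have hcardG : Nat.card G = 72 := by
    have eG : G ≃ (Equiv.Perm (Fin 3) × Equiv.Perm (Fin 3)) × Multiplicative (ZMod 2) :=
      ⟨fun g => (g.left, g.right), fun p => ⟨p.1, p.2⟩, fun _ => rfl, fun _ => rfl⟩
    rw [Nat.card_congr eG, Nat.card_prod, Nat.card_prod,
      Nat.card_congr (Multiplicative.ofAdd (α := ZMod 2)).symm, Nat.card_zmod,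
      Nat.card_eq_fintype_card, Fintype.card_perm, Fintype.card_fin]
    norm_num [Nat.factorial]
  have hSindex : S.index = 8 := by
    have := Subgroup.card_mul_index S
    rw [hcardS, hcardG] at this
    omega
  have h3 : H.index ∣ f.ker.index :=
    Subgroup.index_dvd_of_le (by rw [← hK]; exact H.normalCore_le)
  rw [hH] at h3
  have h8 : f.ker.index ∣ S.index := Subgroup.index_dvd_of_le hSker
  have h38 : (3 : ℕ) ∣ S.index := h3.trans h8
  rw [hSindex] at h38
  norm_num at h38
end

section
/- Let ζ₈ = e^{2πi/8} ∈ ℂ, let σ be the linear map of ℂ⁵ given by (x₁,x₂,x₃,x₄,x₅) ↦ (x₄, x₁, x₂, x₃, ζ₈ x₅), and let f = x₁x₂x₃ + x₁x₂x₄ + x₁x₃x₄ + x₂x₃x₄ + x₅²(x₁ − ζ₈² x₂ − x₃ + ζ₈² x₄). Then σ has order 8 (σ⁸ = id and σ⁴ ≠ id) and f ∘ σ = f. -/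
/-- For `ζ₈ = e^{2πi/8}`, the linear map `σ : (x₁,…,x₅) ↦ (x₄, x₁, x₂, x₃, ζ₈ x₅)`
has order 8 and preserves the 4-nodal cubic
`f = x₁x₂x₃ + x₁x₂x₄ + x₁x₃x₄ + x₂x₃x₄ + x₅²(x₁ - ζ₈²x₂ - x₃ + ζ₈²x₄)`:
one has `f ∘ σ = f`. -/
theorem stmt_13 (ζ₈ : ℂ) (hζ₈ : ζ₈ = Complex.exp (2 * Real.pi * Complex.I / 8))
    (σ : (Fin 5 → ℂ) → (Fin 5 → ℂ))
    (hσ : ∀ x, σ x = ![x 3, x 0, x 1, x 2, ζ₈ * x 4])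
    (f : (Fin 5 → ℂ) → ℂ)
    (hf : ∀ x, f x = x 0 * x 1 * x 2 + x 0 * x 1 * x 3 + x 0 * x 2 * x 3 +
      x 1 * x 2 * x 3 + (x 4) ^ 2 * (x 0 - ζ₈ ^ 2 * x 1 - x 2 + ζ₈ ^ 2 * x 3)) :
    σ^[8] = id ∧ σ^[4] ≠ id ∧ ∀ x, f (σ x) = f x := by
  have h8 : ζ₈ ^ 8 = 1 := by
    rw [hζ₈, ← Complex.exp_nat_mul]
    rw [show (8 : ℕ) * (2 * ↑Real.pi * Complex.I / 8) = 2 * ↑Real.pi * Complex.I by ring]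
    exact Complex.exp_two_pi_mul_I
  have h4 : ζ₈ ^ 4 = -1 := by
    rw [hζ₈, ← Complex.exp_nat_mul]
    rw [show (4 : ℕ) * (2 * ↑Real.pi * Complex.I / 8) = ↑Real.pi * Complex.I by ring]
    exact Complex.exp_pi_mul_I
  refine ⟨?_, ?_, ?_⟩
  · funext x i
    simp only [Function.iterate_succ, Function.iterate_zero, Function.comp_apply, id_eq, hσ]
    fin_cases i <;> simp <;> linear_combination x 4 * h8
  · intro h
    have := congrFun (congrFun h ![0,0,0,0,1]) 4
    simp only [Function.iterate_succ, Function.iterate_zero, Function.comp_apply, id_eq, hσ] at this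
    simp at this
    rw [show ζ₈ * (ζ₈ * (ζ₈ * ζ₈)) = ζ₈ ^ 4 by ring, h4] at this
    norm_num at this
  · intro x
    rw [hf, hf, hσ]
    simp only [Matrix.cons_val_zero, Matrix.cons_val_one, Matrix.head_cons,
      Matrix.cons_val_two, Matrix.tail_cons, Matrix.cons_val_three, Matrix.cons_val_four]
    linear_combination (x 4)^2 * (x 2 - x 0) * h4
end

section
/- Let ζ₁₂ = e^{2πi/12} and let ι be the linear map (x₁,x₂,x₃,x₄,x₅) ↦ (ζ₁₂⁸ x₂, ζ₁₂⁸ x₁, x₃, ζ₁₂⁴ x₄, ζ₁₂ x₅) of ℂ⁵. Let f = x₁x₂x₃ + x₁(x₄² − x₅²) + x₂(x₄² + x₅²) + x₃²x₄. Then ι has order 12, f ∘ ι = ζ₁₂⁴ · f (so ι preserves the hypersurface {f = 0} ⊂ P⁴), and the induced map on P⁴ swaps the two points [1:0:0:0:0] and [0:1:0:0:0]. -/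
/-! `ι` is the swap of the first two coordinates followed by a diagonal scaling, so `ι²` is the
diagonal map `diag(ζ¹⁶, ζ¹⁶, 1, ζ⁸, ζ²)`, whose sixth power is the identity; the last coordinate
is multiplied by `ζ` at each step, so no smaller iterate is the identity. Substituting `ι` into the
cubic multiplies each monomial by `ζ⁴`, using only `ζ¹² = 1` and `ζ⁶ = -1`. -/

section SwapScale

variable {R : Type*}

def swapScale [Mul R] (a b c : R) (x : Fin 5 → R) : Fin 5 → R :=
  ![a * x 1, a * x 0, x 2, b * x 3, c * x 4]

def nodalCubic [CommRing R] (x : Fin 5 → R) : R :=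
  x 0 * x 1 * x 2 + x 0 * (x 3 ^ 2 - x 4 ^ 2) + x 1 * (x 3 ^ 2 + x 4 ^ 2) + x 2 ^ 2 * x 3

theorem swapScale_comp_self [CommMonoid R] (a b c : R) :
    swapScale a b c ∘ swapScale a b c = (![a ^ 2, a ^ 2, 1, b ^ 2, c ^ 2] * ·) := by
  funext x i
  fin_cases i <;> simp [swapScale, sq, mul_assoc]

theorem iterate_swapScale_two_mul [CommMonoid R] (a b c : R) (n : ℕ) :
    (swapScale a b c)^[2 * n] = (![a ^ 2, a ^ 2, 1, b ^ 2, c ^ 2] ^ n * ·) := by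
  rw [Function.iterate_mul, Function.iterate_succ, Function.iterate_one, swapScale_comp_self,
    mul_left_iterate]

theorem iterate_swapScale_eq_id [CommMonoid R] {a b c : R} {n : ℕ} (ha : a ^ (2 * n) = 1)
    (hb : b ^ (2 * n) = 1) (hc : c ^ (2 * n) = 1) : (swapScale a b c)^[2 * n] = id := by
  rw [iterate_swapScale_two_mul]
  funext x i
  fin_cases i <;> simp [← pow_mul, ha, hb, hc]

theorem iterate_swapScale_apply_four [Monoid R] (a b c : R) (k : ℕ) (x : Fin 5 → R) :
    (swapScale a b c)^[k] x 4 = c ^ k * x 4 := by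
  induction k with
  | zero => simp
  | succ k ih =>
    rw [Function.iterate_succ_apply', swapScale]
    simp [ih, pow_succ', mul_assoc]

theorem iterate_swapScale_ne_id [Monoid R] [Nontrivial R] (a b : R) {c : R} {k : ℕ}
    (hc : c ^ k ≠ 1) : (swapScale a b c)^[k] ≠ id := by
  intro h
  have h4 := iterate_swapScale_apply_four a b c k 1
  rw [h, id, Pi.one_apply, mul_one] at h4
  exact hc h4.symm

theorem swapScale_first [MulZeroOneClass R] (a b c : R) :
    swapScale a b c ![1, 0, 0, 0, 0] = a • ![0, 1, 0, 0, 0] := by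
  funext i
  fin_cases i <;> simp [swapScale]

theorem swapScale_second [MulZeroOneClass R] (a b c : R) :
    swapScale a b c ![0, 1, 0, 0, 0] = a • ![1, 0, 0, 0, 0] := by
  funext i
  fin_cases i <;> simp [swapScale]

theorem nodalCubic_swapScale [CommRing R] {a b c : R} (hab : a * b = 1) (ha : a ^ 2 = b)
    (hc : a * c ^ 2 = -b) (x : Fin 5 → R) :
    nodalCubic (swapScale a b c x) = b * nodalCubic x := by
  simp only [nodalCubic, swapScale, Matrix.cons_val_zero, Matrix.cons_val_one, Matrix.head_cons,
    Matrix.cons_val_two, Matrix.tail_cons, Matrix.cons_val_three, Matrix.cons_val_four]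
  linear_combination x 0 * x 1 * x 2 * ha + (x 0 + x 1) * x 3 ^ 2 * b * hab +
    (x 0 - x 1) * x 4 ^ 2 * hc

end SwapScale

/-- For `ζ₁₂ = e^{2πi/12}`, the linear map
`ι : (x₁,…,x₅) ↦ (ζ₁₂⁸x₂, ζ₁₂⁸x₁, x₃, ζ₁₂⁴x₄, ζ₁₂x₅)` has order 12, satisfies
`f ∘ ι = ζ₁₂⁴·f` for the 2-nodal cubic
`f = x₁x₂x₃ + x₁(x₄² - x₅²) + x₂(x₄² + x₅²) + x₃²x₄` (so `ι` preserves `{f = 0}`),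
and the induced map on `ℙ⁴` swaps the two points `[1:0:0:0:0]` and `[0:1:0:0:0]`. -/
theorem stmt_18 (ζ : ℂ) (hζ : ζ = Complex.exp (2 * Real.pi * Complex.I / 12))
    (ι : (Fin 5 → ℂ) → (Fin 5 → ℂ))
    (hι : ∀ x, ι x = ![ζ ^ 8 * x 1, ζ ^ 8 * x 0, x 2, ζ ^ 4 * x 3, ζ * x 4])
    (f : (Fin 5 → ℂ) → ℂ)
    (hf : ∀ x, f x = x 0 * x 1 * x 2 + x 0 * ((x 3) ^ 2 - (x 4) ^ 2) +
      x 1 * ((x 3) ^ 2 + (x 4) ^ 2) + (x 2) ^ 2 * x 3) :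
    (ι^[12] = id ∧ ∀ k : ℕ, 0 < k → k < 12 → ι^[k] ≠ id) ∧
    (∀ x, f (ι x) = ζ ^ 4 * f x) ∧
    (∃ c : ℂ, c ≠ 0 ∧ ι ![1, 0, 0, 0, 0] = c • ![0, 1, 0, 0, 0]) ∧
    (∃ c : ℂ, c ≠ 0 ∧ ι ![0, 1, 0, 0, 0] = c • ![1, 0, 0, 0, 0]) := by
  obtain rfl : ι = swapScale (ζ ^ 8) (ζ ^ 4) ζ := funext hι
  obtain rfl : f = nodalCubic := funext hf
  have hprim : IsPrimitiveRoot ζ 12 := by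
    rw [hζ, show 2 * Real.pi * Complex.I / 12 = 2 * Real.pi * Complex.I / (12 : ℕ) by norm_num]
    exact Complex.isPrimitiveRoot_exp 12 (by norm_num)
  have h12 : ζ ^ 12 = 1 := hprim.pow_eq_one
  have h6 : ζ ^ 6 = -1 := (hprim.pow_of_dvd (by norm_num) (by norm_num)).eq_neg_one_of_two_right
  have h8 : ζ ^ 8 ≠ 0 := pow_ne_zero _ (hprim.ne_zero (by norm_num))
  refine ⟨⟨?_, fun k hk0 hk12 => iterate_swapScale_ne_id _ _ (hprim.pow_ne_one_of_pos_of_lt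
      hk0.ne' hk12)⟩, nodalCubic_swapScale ?_ ?_ ?_, ⟨_, h8, swapScale_first _ _ _⟩,
    ⟨_, h8, swapScale_second _ _ _⟩⟩
  · refine iterate_swapScale_eq_id (n := 6) ?_ ?_ ?_ <;>
      simp only [← pow_mul, hprim.pow_eq_one_iff_dvd] <;> norm_num
  · linear_combination h12
  · linear_combination ζ ^ 4 * h12
  · linear_combination ζ ^ 4 * h6
end
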